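/- arXiv:2007.11495 — 2 statements merged into one kernel-verified Lean document; each statement's English description precedes it below -/
import Mathlib

section
/- With the setup of the canonical path function ρ (tie-breaking via bottleneck edges and a linear order ≺ on edges): if G' is a subgraph of G and the path ρ_G(u,v) is entirely contained in G', then ρ_{G'}(u,v) = ρ_G(u,v). -/
variable {V : Type*} [DecidableEq V]

/-- `p` is a walk from `u` to `v` using edges of `E` (given as a list of vertices). -/
def IsWalk (E : Finset (V × V)) (u v : V) (p : List V) : Prop :=
  p.head? = some u ∧ p.getLast? = some v ∧ p.Chain' (fun a b => (a, b) ∈ E)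

/-- The edges of a path given as a list of vertices. -/
def pathEdges (p : List V) : List (V × V) := p.zip p.tail

/-- Total weight of a path. -/
def wt (w : V × V → ℕ) (p : List V) : ℕ := ((pathEdges p).map w).sum

/-- `p` is a shortest walk from `u` to `v` in the graph with edge set `E` and weights `w`. -/
def IsShortest (E : Finset (V × V)) (w : V × V → ℕ) (u v : V) (p : List V) : Prop :=
  IsWalk E u v p ∧ ∀ q, IsWalk E u v q → wt w p ≤ wt w q

/-- `e` is the bottleneck (`≺`-smallest) edge of the path `p`. -/
def IsBottleneck [LinearOrder (V × V)] (p : List V) (e : V × V) : Prop :=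
  e ∈ pathEdges p ∧ ∀ e' ∈ pathEdges p, e ≤ e'

/-- `e = w_{G'}(u,v)`: the `≺`-largest edge that is the bottleneck edge of some
shortest `u → v` path. -/
def IsMaxBottleneck [LinearOrder (V × V)] (E : Finset (V × V)) (w : V × V → ℕ)
    (u v : V) (e : V × V) : Prop :=
  (∃ p, IsShortest E w u v p ∧ IsBottleneck p e) ∧
  ∀ e', (∃ p, IsShortest E w u v p ∧ IsBottleneck p e') → e' ≤ e

/-- `ρ` is the canonical shortest-path function: `ρ u u` is the trivial path, and
for `u ≠ v` (with `v` reachable from `u`), `ρ u v` is a shortest path obtained by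
concatenating `ρ u u⋆`, the edge `w_{G'}(u,v) = (u⋆, v⋆)`, and `ρ v⋆ v`. -/
def IsCanonical [LinearOrder (V × V)] (E : Finset (V × V)) (w : V × V → ℕ)
    (ρ : V → V → List V) : Prop :=
  (∀ u, ρ u u = [u]) ∧
  (∀ u v, u ≠ v → (∃ p, IsWalk E u v p) →
    IsShortest E w u v (ρ u v) ∧
    ∃ e, IsMaxBottleneck E w u v e ∧ ρ u v = ρ u e.1 ++ ρ e.2 v)

/-- Shortest-path distance in the graph `(E, w)`, `⊤` if unreachable. -/
noncomputable def gdist (E : Finset (V × V)) (w : V × V → ℕ) (u v : V) : ℕ∞ :=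
  sInf {n : ℕ∞ | ∃ p, IsWalk E u v p ∧ (wt w p : ℕ∞) = n}

/-- Remove a failed vertex or edge from the edge set. -/
def removeF (E : Finset (V × V)) (f : V ⊕ (V × V)) : Finset (V × V) :=
  match f with
  | Sum.inl x => E.filter (fun e => e.1 ≠ x ∧ e.2 ≠ x)
  | Sum.inr e0 => E.erase e0

/-!
The canonical path `ρ u v` has the `≺`-largest bottleneck among all shortest `u → v` paths:
by induction on its weight, each of its halves `ρ u u⋆` and `ρ v⋆ v` does, and the halves of a
shortest path realising `w(u, v) = (u⋆, v⋆)` show that these bottlenecks are at least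
`w(u, v)`. So if `ρ_G(u, v)` lies in `G'`, it is a shortest path of `G'` (the distances agree)
with bottleneck `w_G(u, v)`, which forces `w_{G'}(u, v) = w_G(u, v)`; both canonical paths
then split at the same edge, and induction on the weight applies to the two halves.
-/

section Paths

variable {V : Type*} {E E' : Finset (V × V)} {w : V × V → ℕ} {u v a b : V} {p q : List V}

@[simp]
theorem pathEdges_cons_cons (x y : V) (l : List V) :
    pathEdges (x :: y :: l) = (x, y) :: pathEdges (y :: l) := rfl

theorem mem_pathEdges_iff :
    (a, b) ∈ pathEdges p ↔ ∃ l₁ l₂, p = l₁ ++ a :: b :: l₂ := by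
  induction p using List.twoStepInduction with
  | nil => simp [pathEdges]
  | singleton x =>
    simp only [pathEdges, List.tail_cons, List.zip_nil_right, List.not_mem_nil, false_iff]
    rintro ⟨l₁, l₂, h⟩
    have := congrArg List.length h
    simp at this
    omega
  | cons_cons x y l _ ih =>
    rw [pathEdges_cons_cons, List.mem_cons, ih, Prod.mk.injEq]
    constructor
    · rintro (⟨rfl, rfl⟩ | ⟨l₁, l₂, h⟩)
      · exact ⟨[], l, rfl⟩
      · exact ⟨x :: l₁, l₂, by rw [h]; rfl⟩
    · rintro ⟨_ | ⟨z, l₁⟩, l₂, h⟩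
      · simp_all
      · simp only [List.cons_append, List.cons.injEq] at h
        exact Or.inr ⟨l₁, l₂, h.2⟩

theorem isWalk_singleton (x : V) : IsWalk E x x [x] :=
  ⟨rfl, rfl, List.isChain_singleton _⟩

theorem IsWalk.mono (hsub : E ⊆ E') (h : IsWalk E u v p) : IsWalk E' u v p :=
  ⟨h.1, h.2.1, h.2.2.imp fun _ _ hab => hsub hab⟩

theorem IsWalk.mem_of_mem_pathEdges (h : IsWalk E u v p) (he : (a, b) ∈ pathEdges p) :
    (a, b) ∈ E := by
  obtain ⟨l₁, l₂, rfl⟩ := mem_pathEdges_iff.mp he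
  exact List.isChain_iff_forall_rel_of_append_cons_cons.mp h.2.2 rfl

theorem IsWalk.pathEdges_ne_nil (h : IsWalk E u v p) (huv : u ≠ v) : pathEdges p ≠ [] := by
  obtain ⟨hu, hv, -⟩ := h
  match p with
  | [x] => simp_all
  | x :: y :: l => simp

theorem IsWalk.append (hp : IsWalk E u a p) (hq : IsWalk E b v q) (hab : (a, b) ∈ E) :
    IsWalk E u v (p ++ q) := by
  refine ⟨by simp [List.head?_append, hp.1], by simp [List.getLast?_append, hq.2.1], ?_⟩
  refine List.isChain_append.mpr ⟨hp.2.2, hq.2.2, ?_⟩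
  simp_all [hp.2.1, hq.1]

theorem IsWalk.exists_split (h : IsWalk E u v p) (hab : (a, b) ∈ pathEdges p) :
    ∃ p₁ p₂, p = p₁ ++ p₂ ∧ IsWalk E u a p₁ ∧ IsWalk E b v p₂ := by
  obtain ⟨l₁, l₂, rfl⟩ := mem_pathEdges_iff.mp hab
  obtain ⟨hu, hv, hchain⟩ := h
  obtain ⟨h₁, -, h₂⟩ := List.isChain_append_cons_cons.mp hchain
  refine ⟨l₁ ++ [a], b :: l₂, by simp, ⟨?_, by simp, h₁⟩, ⟨rfl, ?_, h₂⟩⟩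
  · cases l₁ <;> simp_all
  · simpa [List.getLast?_append] using hv

theorem isWalk_of_isWalk_append (hp : IsWalk E u a p) (hq : IsWalk E b v q)
    (h : IsWalk E' u v (p ++ q)) : IsWalk E' u a p ∧ IsWalk E' b v q :=
  ⟨⟨hp.1, hp.2.1, h.2.2.left_of_append⟩, ⟨hq.1, hq.2.1, h.2.2.right_of_append⟩⟩

theorem pathEdges_append_of_getLast?_of_head? (hp : p.getLast? = some a)
    (hq : q.head? = some b) : pathEdges (p ++ q) = pathEdges p ++ (a, b) :: pathEdges q := by
  obtain ⟨q, rfl⟩ : ∃ q', q = b :: q' := by cases q <;> simp_all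
  induction p using List.twoStepInduction with
  | nil => simp at hp
  | singleton x => simp_all [pathEdges]
  | cons_cons x y l _ ih => simp_all

theorem pathEdges_append (hp : IsWalk E u a p) (hq : IsWalk E b v q) :
    pathEdges (p ++ q) = pathEdges p ++ (a, b) :: pathEdges q :=
  pathEdges_append_of_getLast?_of_head? hp.2.1 hq.1

theorem wt_append (hp : IsWalk E u a p) (hq : IsWalk E b v q) :
    wt w (p ++ q) = wt w p + w (a, b) + wt w q := by
  simp [wt, pathEdges_append hp hq, add_assoc]

end Paths

section ShortestPaths

variable {V : Type*} {E E' : Finset (V × V)} {w : V × V → ℕ} {u v a b : V} {p q : List V}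

theorem IsShortest.split (h : IsShortest E w u v (p ++ q)) (hp : IsWalk E u a p)
    (hq : IsWalk E b v q) (hab : (a, b) ∈ E) :
    IsShortest E w u a p ∧ IsShortest E w b v q := by
  have hwt := wt_append (w := w) hp hq
  refine ⟨⟨hp, fun p' hp' => ?_⟩, ⟨hq, fun q' hq' => ?_⟩⟩
  · have := h.2 _ (hp'.append hq hab)
    rw [hwt, wt_append hp' hq] at this
    omega
  · have := h.2 _ (hp.append hq' hab)
    rw [hwt, wt_append hp hq'] at this
    omega

theorem IsShortest.of_subset (hsub : E' ⊆ E) (h : IsShortest E w u v p)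
    (hp : IsWalk E' u v p) : IsShortest E' w u v p :=
  ⟨hp, fun q hq => h.2 q (hq.mono hsub)⟩

theorem IsShortest.of_subset_of_isShortest (hsub : E' ⊆ E) (h : IsShortest E w u v p)
    (hp : IsWalk E' u v p) (hq : IsShortest E' w u v q) : IsShortest E w u v q :=
  ⟨hq.1.mono hsub, fun r hr => (hq.2 p hp).trans (h.2 r hr)⟩

end ShortestPaths

section Bottlenecks

variable {V : Type*} [LinearOrder (V × V)] {E E' : Finset (V × V)} {w : V × V → ℕ}
  {u v a b : V} {p q : List V} {e e' : V × V}

theorem exists_isBottleneck (hp : pathEdges p ≠ []) : ∃ e, IsBottleneck p e := by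
  obtain ⟨e, he, hmin⟩ := (pathEdges p).toFinset.exists_min_image id (by simpa using hp)
  exact ⟨e, by simpa using he, fun e' he' => hmin e' (by simpa using he')⟩

theorem IsMaxBottleneck.unique (h : IsMaxBottleneck E w u v e) (h' : IsMaxBottleneck E w u v e') :
    e = e' :=
  le_antisymm (h'.2 e h.1) (h.2 e' h'.1)

theorem IsMaxBottleneck.le_of_isShortest (h : IsMaxBottleneck E w u v e) (huv : u ≠ v)
    (hq : IsShortest E w u v q) (hle : ∀ f ∈ pathEdges q, e' ≤ f) : e' ≤ e := by
  obtain ⟨m, hm⟩ := exists_isBottleneck (hq.1.pathEdges_ne_nil huv)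
  exact (hle m hm.1).trans (h.2 m ⟨q, hq, hm⟩)

theorem IsMaxBottleneck.exists_split (h : IsMaxBottleneck E w u v (a, b)) :
    (a, b) ∈ E ∧ ∃ p q, IsShortest E w u a p ∧ IsShortest E w b v q ∧
      (∀ f ∈ pathEdges p, (a, b) ≤ f) ∧ ∀ f ∈ pathEdges q, (a, b) ≤ f := by
  obtain ⟨r, hr, hab, hmin⟩ := h.1
  have habE := hr.1.mem_of_mem_pathEdges hab
  obtain ⟨p, q, rfl, hp, hq⟩ := hr.1.exists_split hab
  rw [pathEdges_append hp hq] at hmin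
  obtain ⟨hp', hq'⟩ := hr.split hp hq habE
  exact ⟨habE, p, q, hp', hq', fun f hf => hmin f (by simp [hf]),
    fun f hf => hmin f (by simp [hf])⟩

theorem IsMaxBottleneck.eq_of_subset (hsub : E' ⊆ E) (h : IsMaxBottleneck E w u v e)
    (h' : IsMaxBottleneck E' w u v e') (hp : IsShortest E w u v p) (hpE' : IsWalk E' u v p)
    (hbot : IsBottleneck p e) : e' = e := by
  refine le_antisymm (h.2 e' ?_) (h'.2 e ⟨p, hp.of_subset hsub hpE', hbot⟩)
  obtain ⟨q, hq, hqbot⟩ := h'.1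
  exact ⟨q, hp.of_subset_of_isShortest hsub hpE' hq, hqbot⟩

end Bottlenecks

section Canonical

variable {V : Type*} [LinearOrder (V × V)] {E : Finset (V × V)} {w : V × V → ℕ}
  {ρ : V → V → List V} {u v : V} {q : List V} {e f : V × V}

theorem IsCanonical.isWalk (h : IsCanonical E w ρ) (hreach : ∃ p, IsWalk E u v p) :
    IsWalk E u v (ρ u v) := by
  obtain rfl | huv := eq_or_ne u v
  · rw [h.1]
    exact isWalk_singleton u
  · exact (h.2 u v huv hreach).1.1

theorem IsCanonical.exists_split (h : IsCanonical E w ρ) (huv : u ≠ v)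
    (hreach : ∃ p, IsWalk E u v p) :
    ∃ a b, IsMaxBottleneck E w u v (a, b) ∧ (a, b) ∈ E ∧ IsWalk E u a (ρ u a) ∧
      IsWalk E b v (ρ b v) ∧ ρ u v = ρ u a ++ ρ b v := by
  obtain ⟨-, ⟨a, b⟩, hmax, hsplit⟩ := h.2 u v huv hreach
  obtain ⟨habE, p, q, hp, hq, -⟩ := hmax.exists_split
  exact ⟨a, b, hmax, habE, h.isWalk ⟨p, hp.1⟩, h.isWalk ⟨q, hq.1⟩, hsplit⟩

theorem IsCanonical.le_of_mem_pathEdges (h : IsCanonical E w ρ) (hw : ∀ e ∈ E, 1 ≤ w e)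
    (hq : IsShortest E w u v q) (hle : ∀ f ∈ pathEdges q, e ≤ f)
    (hf : f ∈ pathEdges (ρ u v)) : e ≤ f := by
  induction hn : wt w (ρ u v) using Nat.strong_induction_on generalizing u v q e f with
  | _ n ih =>
    obtain rfl | huv := eq_or_ne u v
    · simp [h.1, pathEdges] at hf
    obtain ⟨a, b, hmax, habE, hwa, hwb, hsplit⟩ := h.exists_split huv ⟨q, hq.1⟩
    obtain ⟨-, p₁, p₂, hp₁, hp₂, hle₁, hle₂⟩ := hmax.exists_split
    have heab : e ≤ (a, b) := hmax.le_of_isShortest huv hq hle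
    have hwt := wt_append (w := w) hwa hwb
    have hab_pos := hw _ habE
    rw [← hsplit, hn] at hwt
    rw [hsplit, pathEdges_append hwa hwb] at hf
    simp only [List.mem_append, List.mem_cons] at hf
    rcases hf with hf | rfl | hf
    · exact heab.trans (ih _ (by omega) hp₁ hle₁ hf rfl)
    · exact heab
    · exact heab.trans (ih _ (by omega) hp₂ hle₂ hf rfl)

theorem IsCanonical.isBottleneck (h : IsCanonical E w ρ) (hw : ∀ e ∈ E, 1 ≤ w e)
    (huv : u ≠ v) (hmax : IsMaxBottleneck E w u v e) : IsBottleneck (ρ u v) e := by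
  obtain ⟨p, hp, hpbot⟩ := hmax.1
  obtain ⟨a, b, hmax', -, hwa, hwb, hsplit⟩ := h.exists_split huv ⟨p, hp.1⟩
  obtain rfl := hmax'.unique hmax
  exact ⟨by simp [hsplit, pathEdges_append hwa hwb],
    fun f hf => h.le_of_mem_pathEdges hw hp hpbot.2 hf⟩

end Canonical

theorem stmt9 [LinearOrder (V × V)] (E E' : Finset (V × V)) (hsub : E' ⊆ E)
    (w : V × V → ℕ) (hw : ∀ e ∈ E, 1 ≤ w e)
    (ρ ρ' : V → V → List V) (h1 : IsCanonical E w ρ) (h2 : IsCanonical E' w ρ')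
    (u v : V) (hin : IsWalk E' u v (ρ u v)) :
    ρ' u v = ρ u v := by
  induction hn : wt w (ρ u v) using Nat.strong_induction_on generalizing u v with
  | _ n ih =>
    obtain rfl | huv := eq_or_ne u v
    · rw [h1.1, h2.1]
    have hinE := hin.mono hsub
    obtain ⟨a, b, hmax, habE, hwa, hwb, hsplit⟩ := h1.exists_split huv ⟨_, hinE⟩
    obtain ⟨-, e', hmax', hsplit'⟩ := h2.2 u v huv ⟨_, hin⟩
    obtain rfl : e' = (a, b) := hmax.eq_of_subset hsub hmax' (h1.2 u v huv ⟨_, hinE⟩).1 hin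
      (h1.isBottleneck hw huv hmax)
    obtain ⟨hwa', hwb'⟩ := isWalk_of_isWalk_append hwa hwb (hsplit ▸ hin)
    have hwt := wt_append (w := w) hwa hwb
    have hab_pos := hw _ habE
    rw [← hsplit, hn] at hwt
    rw [hsplit', hsplit, ih _ (by omega) _ _ hwa' rfl, ih _ (by omega) _ _ hwb' rfl]
end

section
/- (Truncated version of the replacement-path decomposition.) With ‖p‖_r := min(‖p‖, r), under the same hypotheses as the replacement-path decomposition (f strictly between consecutive key vertices k_i, k_{i+1} on the shortest path uv, and y a vertex of [k_i,k_{i+1}] maximizing d_r(u,v,y) where d_r(u,v,x) := min(d(u,v,x), r)): d_r(u,v,f) = min{ d_r(u,k_{i+1},f) + d(k_{i+1},v), d(u,k_i) + d_r(k_i,v,f), d_r(u,v,y), r }. -/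
/-!
Since the weights are positive, `p` has no repeated vertex, so its prefix up to `k_i` and its
suffix from `k_{i+1}` survive the failure `f` inside the segment `[k_i, k_{i+1}]`; splicing them
onto replacement paths gives the first two upper bounds. Avoiding `f` costs at most as much as
avoiding an endpoint of `f`, a segment vertex, so the choice of `y` gives the third bound.

Conversely, let `q` be a shortest path avoiding `f`. If `q` meets the segment at `z`, then `f`
lies on one side of `z` along `p`, and following `p` on the other side of `z` (through `k_{i+1}`
or from `k_i`) instead of `q` does not lengthen it. If `q` misses the segment, it avoids `y`.
-/

variable {V : Type*} [DecidableEq V]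

open List

section Walks

variable {α : Type*} {E E' : Finset (α × α)} {w : α × α → ℕ} {u v m z : α}
  {p l₁ l₂ : List α} {f : α ⊕ (α × α)}

lemma pathEdges_cons_cons_s12 (a b : α) (l : List α) :
    pathEdges (a :: b :: l) = (a, b) :: pathEdges (b :: l) := rfl

lemma pathEdges_append_cons (l₁ : List α) (m : α) (l₂ : List α) :
    pathEdges (l₁ ++ m :: l₂) = pathEdges (l₁ ++ [m]) ++ pathEdges (m :: l₂) := by
  induction l₁ with
  | nil => rfl
  | cons a t ih =>
    cases t with
    | nil => rfl
    | cons b t =>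
      simp only [cons_append, pathEdges_cons_cons_s12] at ih ⊢
      rw [ih]

lemma wt_append_cons (w : α × α → ℕ) (l₁ : List α) (m : α) (l₂ : List α) :
    wt w (l₁ ++ m :: l₂) = wt w (l₁ ++ [m]) + wt w (m :: l₂) := by
  rw [wt, wt, wt, pathEdges_append_cons, map_append, sum_append]

lemma fst_mem_of_mem_pathEdges {e : α × α} (h : e ∈ pathEdges p) : e.1 ∈ p :=
  (of_mem_zip h).1

lemma snd_mem_tail_of_mem_pathEdges {e : α × α} (h : e ∈ pathEdges p) : e.2 ∈ p.tail :=
  (of_mem_zip h).2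

lemma isChain_iff_forall_mem_pathEdges {R : α → α → Prop} :
    IsChain R p ↔ ∀ e ∈ pathEdges p, R e.1 e.2 := by
  induction p with
  | nil => simp [pathEdges]
  | cons a t ih =>
    cases t with
    | nil => simp [pathEdges]
    | cons b t => simp [pathEdges_cons_cons_s12, ih]

lemma isWalk_iff :
    IsWalk E u v p ↔ p.head? = some u ∧ p.getLast? = some v ∧ ∀ e ∈ pathEdges p, e ∈ E :=
  and_congr_right' (and_congr_right' isChain_iff_forall_mem_pathEdges)

lemma head?_append_cons (l₁ : List α) (m : α) (l₂ : List α) :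
    (l₁ ++ m :: l₂).head? = (l₁ ++ [m]).head? := by
  cases l₁ <;> rfl

lemma isWalk_append_cons_iff :
    IsWalk E u v (l₁ ++ m :: l₂) ↔ IsWalk E u m (l₁ ++ [m]) ∧ IsWalk E m v (m :: l₂) := by
  rw [isWalk_iff, isWalk_iff, isWalk_iff, head?_append_cons, getLast?_append_cons,
    pathEdges_append_cons, forall_mem_append, getLast?_concat, head?_cons]
  tauto

namespace IsWalk

lemma mono_s12 (hE : E ⊆ E') (h : IsWalk E u v p) : IsWalk E' u v p :=
  ⟨h.1, h.2.1, h.2.2.imp fun _ _ hab => hE hab⟩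

lemma exists_eq_cons (h : IsWalk E u v p) : ∃ p', p = u :: p' :=
  head?_eq_some_iff.1 h.1

lemma exists_eq_concat (h : IsWalk E u v p) : ∃ p', p = p' ++ [v] :=
  getLast?_eq_some_iff.1 h.2.1

end IsWalk

lemma gdist_le_wt (h : IsWalk E u v p) : gdist E w u v ≤ wt w p :=
  sInf_le ⟨p, h, rfl⟩

lemma gdist_anti (hE : E ⊆ E') : gdist E' w u v ≤ gdist E w u v :=
  le_sInf fun _ ⟨_, hp, hwp⟩ => hwp ▸ gdist_le_wt (hp.mono_s12 hE)

lemma exists_isWalk_wt_eq_gdist (h : gdist E w u v ≠ ⊤) :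
    ∃ p, IsWalk E u v p ∧ (wt w p : ℕ∞) = gdist E w u v := by
  have hne : {n : ℕ∞ | ∃ p, IsWalk E u v p ∧ (wt w p : ℕ∞) = n}.Nonempty := by
    refine Set.nonempty_iff_ne_empty.2 fun hempty => h ?_
    rw [gdist, hempty, sInf_empty]
  exact csInf_mem hne

lemma gdist_add_gdist_le_wt (h : IsWalk E u v (l₁ ++ m :: l₂)) :
    gdist E w u m + gdist E w m v ≤ wt w (l₁ ++ m :: l₂) := by
  obtain ⟨h₁, h₂⟩ := isWalk_append_cons_iff.1 h
  rw [wt_append_cons, Nat.cast_add]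
  exact add_le_add (gdist_le_wt h₁) (gdist_le_wt h₂)

lemma gdist_triangle (u m v : α) : gdist E w u v ≤ gdist E w u m + gdist E w m v := by
  rcases eq_or_ne (gdist E w u m) ⊤ with h₁ | h₁
  · simp [h₁]
  rcases eq_or_ne (gdist E w m v) ⊤ with h₂ | h₂
  · simp [h₂]
  obtain ⟨p, hp, hwp⟩ := exists_isWalk_wt_eq_gdist h₁
  obtain ⟨q, hq, hwq⟩ := exists_isWalk_wt_eq_gdist h₂
  obtain ⟨p, rfl⟩ := hp.exists_eq_concat
  obtain ⟨q, rfl⟩ := hq.exists_eq_cons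
  rw [← hwp, ← hwq, ← Nat.cast_add, ← wt_append_cons]
  exact gdist_le_wt (isWalk_append_cons_iff.2 ⟨hp, hq⟩)

lemma one_le_wt (hw : ∀ e ∈ E, 1 ≤ w e) (h : ∀ e ∈ pathEdges p, e ∈ E) {e : α × α}
    (he : e ∈ pathEdges p) : 1 ≤ wt w p :=
  (hw e (h e he)).trans (le_sum_of_mem (mem_map_of_mem he))

namespace IsShortest

lemma gdist_eq (h : IsShortest E w u v p) : gdist E w u v = wt w p :=
  le_antisymm (gdist_le_wt h.1) (le_sInf fun _ ⟨q, hq, hwq⟩ => hwq ▸ by exact_mod_cast h.2 q hq)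

lemma append_cons_left (h : IsShortest E w u v (l₁ ++ m :: l₂)) :
    IsShortest E w u m (l₁ ++ [m]) := by
  obtain ⟨h₁, h₂⟩ := isWalk_append_cons_iff.1 h.1
  refine ⟨h₁, fun q hq => ?_⟩
  obtain ⟨q, rfl⟩ := hq.exists_eq_concat
  have := h.2 _ (isWalk_append_cons_iff.2 ⟨hq, h₂⟩)
  rw [wt_append_cons w l₁ m l₂, wt_append_cons w q m l₂] at this
  omega

lemma append_cons_right (h : IsShortest E w u v (l₁ ++ m :: l₂)) :
    IsShortest E w m v (m :: l₂) := by
  obtain ⟨h₁, h₂⟩ := isWalk_append_cons_iff.1 h.1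
  refine ⟨h₂, fun q hq => ?_⟩
  obtain ⟨q, rfl⟩ := hq.exists_eq_cons
  have := h.2 _ (isWalk_append_cons_iff.2 ⟨h₁, hq⟩)
  rw [wt_append_cons w l₁ m l₂, wt_append_cons w l₁ m q] at this
  omega

lemma gdist_add_gdist (h : IsShortest E w u v (l₁ ++ m :: l₂)) :
    gdist E w u m + gdist E w m v = gdist E w u v := by
  rw [h.gdist_eq, h.append_cons_left.gdist_eq, h.append_cons_right.gdist_eq,
    wt_append_cons w l₁ m l₂, Nat.cast_add]

lemma nodup (hw : ∀ e ∈ E, 1 ≤ w e) (h : IsShortest E w u v p) : p.Nodup := by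
  refine nodup_iff_sublist.2 fun x hx => ?_
  obtain ⟨r₁, r₂, rfl, h₁, h₂⟩ := cons_sublist_iff.1 hx
  obtain ⟨a, b, rfl⟩ := append_of_mem h₁
  obtain ⟨c, d, rfl⟩ := append_of_mem (singleton_sublist.1 h₂)
  rw [show a ++ x :: b ++ (c ++ x :: d) = a ++ x :: (b ++ c ++ x :: d) by simp] at h
  obtain ⟨hux, hxv⟩ := isWalk_append_cons_iff.1 h.1
  obtain ⟨hxx, hxv⟩ := (isWalk_append_cons_iff (l₁ := x :: (b ++ c))).1 hxv
  obtain ⟨y, t, hyt⟩ := exists_cons_of_ne_nil (append_ne_nil_of_right_ne_nil (b ++ c)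
    (cons_ne_nil x []))
  have hcycle : 1 ≤ wt w (x :: (b ++ c) ++ [x]) :=
    one_le_wt hw (isWalk_iff.1 hxx).2.2 (e := (x, y))
      (by rw [cons_append, hyt, pathEdges_cons_cons_s12]; exact mem_cons_self)
  have hshort := h.2 _ (isWalk_append_cons_iff.2 ⟨hux, hxv⟩)
  rw [wt_append_cons w a x, wt_append_cons w a x d,
    show x :: (b ++ c ++ x :: d) = x :: (b ++ c) ++ x :: d from rfl,
    wt_append_cons w (x :: (b ++ c)) x d] at hshort
  omega

end IsShortest

lemma gdist_le_of_isShortest_of_isWalk (hS : IsShortest E w u v p) (hS' : IsWalk E' u v p) :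
    gdist E' w u v ≤ gdist E w u v :=
  hS.gdist_eq ▸ gdist_le_wt hS'

lemma gdist_add_le_of_mem_isShortest_left (hS : IsShortest E w u z p) (hS' : IsWalk E' u z p)
    (hm : m ∈ p) : gdist E w u m + gdist E' w m v ≤ gdist E w u z + gdist E' w z v := by
  obtain ⟨l₁, l₂, rfl⟩ := append_of_mem hm
  calc gdist E w u m + gdist E' w m v ≤ gdist E w u m + (gdist E' w m z + gdist E' w z v) := by
        gcongr; exact gdist_triangle m z v
    _ ≤ gdist E w u m + (gdist E w m z + gdist E' w z v) := by
        gcongr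
        exact gdist_le_of_isShortest_of_isWalk hS.append_cons_right
          (isWalk_append_cons_iff.1 hS').2
    _ = gdist E w u z + gdist E' w z v := by rw [← add_assoc, hS.gdist_add_gdist]

lemma gdist_add_le_of_mem_isShortest_right (hS : IsShortest E w z v p) (hS' : IsWalk E' z v p)
    (hm : m ∈ p) : gdist E' w u m + gdist E w m v ≤ gdist E' w u z + gdist E w z v := by
  obtain ⟨l₁, l₂, rfl⟩ := append_of_mem hm
  calc gdist E' w u m + gdist E w m v ≤ gdist E' w u z + gdist E' w z m + gdist E w m v := by
        gcongr; exact gdist_triangle u z m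
    _ ≤ gdist E' w u z + gdist E w z m + gdist E w m v := by
        gcongr
        exact gdist_le_of_isShortest_of_isWalk hS.append_cons_left
          (isWalk_append_cons_iff.1 hS').1
    _ = gdist E' w u z + gdist E w z v := by rw [add_assoc, hS.gdist_add_gdist]

def Avoids (p : List α) : α ⊕ (α × α) → Prop
  | .inl x => x ∉ p
  | .inr e => e ∉ pathEdges p

lemma avoids_left_or_avoids_right (hp : (l₁ ++ m :: l₂).Nodup) (hf : f ≠ .inl m) :
    Avoids (l₁ ++ [m]) f ∨ Avoids (m :: l₂) f := by
  have hdisj : Disjoint (l₁ ++ [m]) l₂ :=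
    disjoint_of_nodup_append (by simpa using hp)
  rw [or_iff_not_and_not]
  rintro ⟨h₁, h₂⟩
  cases f with
  | inl x =>
    simp only [Avoids, not_not] at h₁ h₂
    exact hdisj h₁ ((mem_cons.1 h₂).resolve_left fun hxm => hf (hxm ▸ rfl))
  | inr e =>
    simp only [Avoids, not_not] at h₁ h₂
    exact hdisj (mem_of_mem_tail (snd_mem_tail_of_mem_pathEdges h₁))
      (snd_mem_tail_of_mem_pathEdges h₂)

end Walks

section Failures

variable {α : Type*} [DecidableEq α] {E : Finset (α × α)} {u v : α} {p : List α}
  {f : α ⊕ (α × α)}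

lemma removeF_subset (E : Finset (α × α)) (f : α ⊕ (α × α)) : removeF E f ⊆ E := by
  cases f with
  | inl x => exact Finset.filter_subset _ _
  | inr e => exact Finset.erase_subset _ _

lemma removeF_inl_fst_subset (E : Finset (α × α)) (e : α × α) :
    removeF E (.inl e.1) ⊆ removeF E (.inr e) := fun a ha => by
  simp only [removeF, Finset.mem_filter, Finset.mem_erase] at ha ⊢
  exact ⟨fun h => ha.2.1 (h ▸ rfl), ha.1⟩

lemma IsWalk.removeF_of_avoids (h : IsWalk E u v p) (hf : Avoids p f) :
    IsWalk (removeF E f) u v p := by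
  rw [isWalk_iff] at h ⊢
  refine ⟨h.1, h.2.1, fun e he => ?_⟩
  cases f with
  | inl x =>
    simp only [removeF, Finset.mem_filter]
    exact ⟨h.2.2 e he, ne_of_mem_of_not_mem (fst_mem_of_mem_pathEdges he) hf,
      ne_of_mem_of_not_mem (mem_of_mem_tail (snd_mem_tail_of_mem_pathEdges he)) hf⟩
  | inr e₀ =>
    simp only [removeF, Finset.mem_erase]
    exact ⟨ne_of_mem_of_not_mem he hf, h.2.2 e he⟩

lemma IsWalk.avoids_of_removeF (h : IsWalk (removeF E f) u v p) (hu : f ≠ .inl u) :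
    Avoids p f := by
  cases f with
  | inl x =>
    obtain ⟨p, rfl⟩ := h.exists_eq_cons
    -- every edge avoids `x`, so `· ≠ x` propagates along the walk from `u`
    refine fun hx => h.2.2.induction (· ≠ x) _
      (fun a b (hab : (a, b) ∈ removeF E (.inl x)) _ => (Finset.mem_filter.1 hab).2.2)
      (fun _ hux => hu (hux ▸ rfl)) x hx rfl
  | inr e =>
    exact fun he => by simpa [removeF] using (isWalk_iff.1 h).2.2 e he

end Failures

section Segment

variable {α : Type*} {E : Finset (α × α)} {w : α × α → ℕ} {u v ki ki1 y : α}
  {p1 p2 p3 q : List α} {f : α ⊕ (α × α)}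

lemma avoids_prefix_and_suffix_of_segment (hnd : (p1 ++ [ki] ++ p2 ++ [ki1] ++ p3).Nodup)
    (hf : match f with
      | .inl x => x ∈ p2
      | .inr e => e ∈ pathEdges ([ki] ++ p2 ++ [ki1])) :
    Avoids (p1 ++ [ki]) f ∧ Avoids (ki1 :: p3) f := by
  have hd₁ : Disjoint (p1 ++ [ki]) (p2 ++ ki1 :: p3) :=
    disjoint_of_nodup_append (by simpa using hnd)
  have hd₂ : Disjoint (p1 ++ [ki] ++ p2) (ki1 :: p3) :=
    disjoint_of_nodup_append (by simpa using hnd)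
  have hd₃ : Disjoint (p1 ++ [ki] ++ p2 ++ [ki1]) p3 := disjoint_of_nodup_append hnd
  cases f with
  | inl x =>
    exact ⟨fun hx => hd₁ hx (mem_append_left _ hf), fun hx => hd₂ (mem_append_right _ hf) hx⟩
  | inr e =>
    have he : e.2 ∈ p2 ++ [ki1] := snd_mem_tail_of_mem_pathEdges hf
    simp only [mem_append, mem_singleton] at he
    refine ⟨fun he' => hd₁ (mem_of_mem_tail (snd_mem_tail_of_mem_pathEdges he')) ?_,
      fun he' => hd₃ ?_ (snd_mem_tail_of_mem_pathEdges he')⟩ <;> simp <;> tauto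

variable [DecidableEq α]

lemma exists_mem_segment_removeF_inl_subset (E : Finset (α × α))
    (hf : match f with
      | .inl x => x ∈ p2
      | .inr e => e ∈ pathEdges ([ki] ++ p2 ++ [ki1])) :
    ∃ z ∈ [ki] ++ p2 ++ [ki1], removeF E (.inl z) ⊆ removeF E f := by
  cases f with
  | inl x => exact ⟨x, by simp [hf], subset_rfl⟩
  | inr e => exact ⟨e.1, fst_mem_of_mem_pathEdges hf, removeF_inl_fst_subset E e⟩

lemma gdist_removeF_le_of_segment (hp : IsShortest E w u v (p1 ++ [ki] ++ p2 ++ [ki1] ++ p3))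
    (hnd : (p1 ++ [ki] ++ p2 ++ [ki1] ++ p3).Nodup)
    (hf : match f with
      | .inl x => x ∈ p2
      | .inr e => e ∈ pathEdges ([ki] ++ p2 ++ [ki1])) :
    gdist (removeF E f) w u v ≤ gdist (removeF E f) w u ki1 + gdist E w ki1 v ∧
      gdist (removeF E f) w u v ≤ gdist E w u ki + gdist (removeF E f) w ki v := by
  obtain ⟨hpre, hsuf⟩ := avoids_prefix_and_suffix_of_segment hnd hf
  have hpre' : IsShortest E w u ki (p1 ++ [ki]) :=
    (by simpa using hp : IsShortest E w u v (p1 ++ ki :: (p2 ++ ki1 :: p3))).append_cons_left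
  have hsuf' : IsShortest E w ki1 v (ki1 :: p3) :=
    (by simpa using hp : IsShortest E w u v ((p1 ++ ki :: p2) ++ ki1 :: p3)).append_cons_right
  exact ⟨(gdist_triangle u ki1 v).trans (add_le_add le_rfl
      (gdist_le_of_isShortest_of_isWalk hsuf' (hsuf'.1.removeF_of_avoids hsuf))),
    (gdist_triangle u ki v).trans (add_le_add
      (gdist_le_of_isShortest_of_isWalk hpre' (hpre'.1.removeF_of_avoids hpre)) le_rfl)⟩

lemma min_le_wt_of_mem_segment (hp : IsShortest E w u v (p1 ++ [ki] ++ p2 ++ [ki1] ++ p3))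
    (hnd : (p1 ++ [ki] ++ p2 ++ [ki1] ++ p3).Nodup) (hq : IsWalk (removeF E f) u v q)
    (hfq : Avoids q f) {z : α} (hz : z ∈ [ki] ++ p2 ++ [ki1]) (hzq : z ∈ q) :
    min (gdist (removeF E f) w u ki1 + gdist E w ki1 v)
      (gdist E w u ki + gdist (removeF E f) w ki v) ≤ wt w q := by
  obtain ⟨s1, s2, hs⟩ := append_of_mem hz
  have hki : ki ∈ p1 ++ s1 ++ [z] := by
    have : ki ∈ (s1 ++ [z]).head? := by rw [← head?_append_cons, ← hs]; simp
    simpa using Or.inr (mem_of_mem_head? this)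
  have hki1 : ki1 ∈ z :: (s2 ++ p3) := by
    have : (z :: s2).getLast? = some ki1 := by
      rw [← getLast?_append_cons s1, ← hs, getLast?_concat]
    exact mem_append_left p3 (mem_of_getLast? this)
  have hsplit : p1 ++ [ki] ++ p2 ++ [ki1] ++ p3 = p1 ++ s1 ++ z :: (s2 ++ p3) := by
    rw [show p1 ++ [ki] ++ p2 ++ [ki1] ++ p3 = p1 ++ ([ki] ++ p2 ++ [ki1]) ++ p3 by simp, hs]
    simp
  rw [hsplit] at hp hnd
  obtain ⟨q1, q2, rfl⟩ := append_of_mem hzq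
  have hqz := gdist_add_gdist_le_wt (w := w) hq
  have hfz : f ≠ .inl z := by rintro rfl; exact hfq hzq
  rcases avoids_left_or_avoids_right hnd hfz with hpre | hsuf
  · refine min_le_of_right_le (le_trans ?_ hqz)
    calc gdist E w u ki + gdist (removeF E f) w ki v
        ≤ gdist E w u z + gdist (removeF E f) w z v :=
          gdist_add_le_of_mem_isShortest_left hp.append_cons_left
            (hp.append_cons_left.1.removeF_of_avoids hpre) hki
      _ ≤ gdist (removeF E f) w u z + gdist (removeF E f) w z v :=
          add_le_add (gdist_anti (removeF_subset E f)) le_rfl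
  · refine min_le_of_left_le (le_trans ?_ hqz)
    calc gdist (removeF E f) w u ki1 + gdist E w ki1 v
        ≤ gdist (removeF E f) w u z + gdist E w z v :=
          gdist_add_le_of_mem_isShortest_right hp.append_cons_right
            (hp.append_cons_right.1.removeF_of_avoids hsuf) hki1
      _ ≤ gdist (removeF E f) w u z + gdist (removeF E f) w z v :=
          add_le_add le_rfl (gdist_anti (removeF_subset E f))

lemma min_le_gdist_removeF_of_segment
    (hp : IsShortest E w u v (p1 ++ [ki] ++ p2 ++ [ki1] ++ p3))
    (hnd : (p1 ++ [ki] ++ p2 ++ [ki1] ++ p3).Nodup)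
    (hf : match f with
      | .inl x => x ∈ p2
      | .inr e => e ∈ pathEdges ([ki] ++ p2 ++ [ki1]))
    (hy : y ∈ [ki] ++ p2 ++ [ki1]) :
    min (min (gdist (removeF E f) w u ki1 + gdist E w ki1 v)
        (gdist E w u ki + gdist (removeF E f) w ki v)) (gdist (removeF E (.inl y)) w u v) ≤
      gdist (removeF E f) w u v := by
  rcases eq_or_ne (gdist (removeF E f) w u v) ⊤ with htop | htop
  · exact htop ▸ le_top
  obtain ⟨q, hq, hwq⟩ := exists_isWalk_wt_eq_gdist htop
  rw [← hwq]
  have hu : u ∈ p1 ++ [ki] := by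
    have := hp.1.1
    rw [show p1 ++ [ki] ++ p2 ++ [ki1] ++ p3 = p1 ++ ki :: (p2 ++ ki1 :: p3) by simp,
      head?_append_cons] at this
    exact mem_of_mem_head? this
  have hpre := (avoids_prefix_and_suffix_of_segment hnd hf).1
  have hfq : Avoids q f := hq.avoids_of_removeF (by rintro rfl; exact hpre hu)
  by_cases hseg : ∃ z ∈ [ki] ++ p2 ++ [ki1], z ∈ q
  · obtain ⟨z, hz, hzq⟩ := hseg
    exact min_le_of_left_le (min_le_wt_of_mem_segment hp hnd hq hfq hz hzq)
  · refine min_le_of_right_le (gdist_le_wt ?_)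
    exact (hq.mono_s12 (removeF_subset E f)).removeF_of_avoids fun hyq => hseg ⟨y, hy, hyq⟩

end Segment

theorem stmt12_general (E : Finset (V × V)) (w : V × V → ℕ) (hw : ∀ e ∈ E, 1 ≤ w e)
    (r : ℕ)
    (u v ki ki1 : V) (p1 p2 p3 : List V) (p : List V)
    (hp : p = p1 ++ [ki] ++ p2 ++ [ki1] ++ p3)
    (hshort : IsShortest E w u v p)
    (f : V ⊕ (V × V))
    (hf : match f with
      | Sum.inl x => x ∈ p2
      | Sum.inr e0 => e0 ∈ pathEdges ([ki] ++ p2 ++ [ki1]))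
    (y : V) (hy : y ∈ [ki] ++ p2 ++ [ki1])
    (hymax : ∀ z ∈ [ki] ++ p2 ++ [ki1],
      min (gdist (removeF E (Sum.inl z)) w u v) (r : ℕ∞) ≤
        min (gdist (removeF E (Sum.inl y)) w u v) (r : ℕ∞)) :
    min (gdist (removeF E f) w u v) (r : ℕ∞) =
      min (min (min (gdist (removeF E f) w u ki1) (r : ℕ∞) + gdist E w ki1 v)
               (gdist E w u ki + min (gdist (removeF E f) w ki v) (r : ℕ∞)))
          (min (min (gdist (removeF E (Sum.inl y)) w u v) (r : ℕ∞)) (r : ℕ∞)) := by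
  subst hp
  have hnd := hshort.nodup hw
  obtain ⟨hviaKi1, hviaKi⟩ := gdist_removeF_le_of_segment hshort hnd hf
  obtain ⟨z, hz, hzf⟩ := exists_mem_segment_removeF_inl_subset E hf
  have hviaY :=
    (min_le_min_right _ (gdist_anti (w := w) (u := u) (v := v) hzf)).trans (hymax z hz)
  have hlower := min_le_gdist_removeF_of_segment hshort hnd hf hy
  refine le_antisymm (le_min (le_min ?_ ?_) (le_min hviaY (min_le_right _ _)))
    (le_min (le_trans ?_ hlower) ((min_le_right _ _).trans (min_le_right _ _)))
  · rw [← min_add_add_right]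
    exact min_le_min hviaKi1 le_self_add
  · rw [← min_add_add_left]
    exact min_le_min hviaKi le_add_self
  · exact min_le_min (min_le_min (add_le_add (min_le_left _ _) le_rfl)
      (add_le_add le_rfl (min_le_left _ _))) ((min_le_left _ _).trans (min_le_left _ _))

theorem stmt12 (E : Finset (V × V)) (w : V × V → ℕ) (hw : ∀ e ∈ E, 1 ≤ w e)
    (r : ℕ) (hr : 1 ≤ r)
    (u v ki ki1 : V) (p1 p2 p3 : List V) (p : List V)
    (hp : p = p1 ++ [ki] ++ p2 ++ [ki1] ++ p3)
    (hshort : IsShortest E w u v p)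
    (hcons : ∀ a m b : List V, p = a ++ m ++ b → ∀ x y : V,
      m.head? = some x → m.getLast? = some y → IsShortest E w x y m)
    (f : V ⊕ (V × V))
    (hf : match f with
      | Sum.inl x => x ∈ p2
      | Sum.inr e0 => e0 ∈ pathEdges ([ki] ++ p2 ++ [ki1]))
    (y : V) (hy : y ∈ [ki] ++ p2 ++ [ki1])
    (hymax : ∀ z ∈ [ki] ++ p2 ++ [ki1],
      min (gdist (removeF E (Sum.inl z)) w u v) (r : ℕ∞) ≤
        min (gdist (removeF E (Sum.inl y)) w u v) (r : ℕ∞)) :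
    min (gdist (removeF E f) w u v) (r : ℕ∞) =
      min (min (min (gdist (removeF E f) w u ki1) (r : ℕ∞) + gdist E w ki1 v)
               (gdist E w u ki + min (gdist (removeF E f) w ki v) (r : ℕ∞)))
          (min (min (gdist (removeF E (Sum.inl y)) w u v) (r : ℕ∞)) (r : ℕ∞)) :=
  stmt12_general E w hw r u v ki ki1 p1 p2 p3 p hp hshort f hf y hy hymax
end
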